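/- Let Γ be a finite connected simple graph with vertex set V and let 𝒯 be a maximal tubing of Γ. For each T ∈ 𝒯 ∪ {V} with |T| ≥ 2, let v_T be the unique vertex of T not contained in any element of 𝒯 properly contained in T, and consider the maximal elements of the set {S ∈ 𝒯 : S ⊊ T} under inclusion. These maximal proper subtubes of T are pairwise disjoint and their union equals T \ {v_T}. -/

import Mathlib

variable {V : Type*} [Fintype V] [DecidableEq V]

/-- A tube of a simple graph: a nonempty proper subset of vertices whose
induced subgraph is connected. -/
def IsTube (G : SimpleGraph V) (T : Finset V) : Prop :=
  T.Nonempty ∧ T ≠ Finset.univ ∧ (G.induce (T : Set V)).Connected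

/-- A tubing: a set of tubes, pairwise either properly nested or disjoint with
no edge between them. -/
def IsTubing (G : SimpleGraph V) (𝒯 : Finset (Finset V)) : Prop :=
  (∀ T ∈ 𝒯, IsTube G T) ∧
  ∀ T ∈ 𝒯, ∀ T' ∈ 𝒯, T ≠ T' →
    T ⊂ T' ∨ T' ⊂ T ∨
      ((∀ v ∈ T, v ∉ T') ∧ ∀ u ∈ T, ∀ v ∈ T', ¬ G.Adj u v)

/-- A maximal tubing: one not properly contained in any other tubing. -/
def IsMaxTubing (G : SimpleGraph V) (𝒯 : Finset (Finset V)) : Prop :=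
  IsTubing G 𝒯 ∧ ∀ 𝒯' : Finset (Finset V), IsTubing G 𝒯' → 𝒯 ⊆ 𝒯' → 𝒯' = 𝒯

/-!
Let `y = v_T`. Every `x ∈ T \ {y}` lies in a maximal connected subset `C` of `T \ {y}`. Such a
`C` absorbs every connected set inside `T \ {y}` that it meets or touches by an edge, and every
proper subtube of `T` lies in `T \ {y}`; hence `C` is compatible with all tubes of `𝒯`, and
maximality of `𝒯` forces `C ∈ 𝒯`. So `x` lies in a proper subtube of `T`, and then in a maximal
one. Distinct maximal proper subtubes cannot be nested, so the tubing condition makes them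
disjoint.
-/

open Finset

namespace SimpleGraph

variable {α : Type*} [DecidableEq α] {G : SimpleGraph α} {A C S : Finset α}

lemma subset_of_maximal_connected_of_union
    (hC : Maximal (fun s : Finset α => s ⊆ A ∧ (G.induce (s : Set α)).Connected) C)
    (hSA : S ⊆ A) (hSC : (G.induce ((S ∪ C : Finset α) : Set α)).Connected) : S ⊆ C :=
  subset_union_left.trans (hC.2 ⟨union_subset hSA hC.1.1, hSC⟩ subset_union_right)

lemma subset_of_maximal_connected_of_inter_nonempty
    (hC : Maximal (fun s : Finset α => s ⊆ A ∧ (G.induce (s : Set α)).Connected) C)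
    (hS : (G.induce (S : Set α)).Connected) (hSA : S ⊆ A) (hSC : (S ∩ C).Nonempty) : S ⊆ C :=
  subset_of_maximal_connected_of_union hC hSA <| by
    rw [coe_union]
    exact induce_union_connected hS.preconnected hC.1.2.preconnected (by exact_mod_cast hSC)

lemma subset_of_maximal_connected_of_adj
    (hC : Maximal (fun s : Finset α => s ⊆ A ∧ (G.induce (s : Set α)).Connected) C)
    (hS : (G.induce (S : Set α)).Connected) (hSA : S ⊆ A)
    {u v : α} (hv : v ∈ S) (hu : u ∈ C) (hvu : G.Adj v u) : S ⊆ C :=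
  subset_of_maximal_connected_of_union hC hSA <| by
    rw [coe_union]
    exact connected_induce_union hS.preconnected hC.1.2.preconnected hv hu hvu

end SimpleGraph

def TubesCompatible (G : SimpleGraph V) (T T' : Finset V) : Prop :=
  T ⊂ T' ∨ T' ⊂ T ∨ ((∀ v ∈ T, v ∉ T') ∧ ∀ u ∈ T, ∀ v ∈ T', ¬ G.Adj u v)

variable {G : SimpleGraph V} {𝒯 : Finset (Finset V)} {S T C : Finset V}

omit [Fintype V] [DecidableEq V] in
lemma TubesCompatible.symm (h : TubesCompatible G T S) : TubesCompatible G S T := by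
  rcases h with h | h | ⟨hdisj, hadj⟩
  · exact Or.inr (Or.inl h)
  · exact Or.inl h
  · exact Or.inr (Or.inr ⟨fun v hvS hvT => hdisj v hvT hvS,
      fun u hu v hv huv => hadj v hv u hu huv.symm⟩)

omit [DecidableEq V] in
lemma IsTubing.tubesCompatible (h : IsTubing G 𝒯) (hS : S ∈ 𝒯) (hT : T ∈ 𝒯) (hne : S ≠ T) :
    TubesCompatible G S T :=
  h.2 S hS T hT hne

lemma IsTubing.subset_or_tubesCompatible (h : IsTubing G 𝒯) (hS : S ∈ 𝒯)
    (hT : T ∈ insert univ 𝒯) : T ⊆ S ∨ TubesCompatible G S T := by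
  rcases mem_insert.1 hT with rfl | hT
  · exact Or.inr (Or.inl (ssubset_univ_iff.2 (h.1 S hS).2.1))
  · rcases eq_or_ne T S with rfl | hne
    · exact Or.inl subset_rfl
    · exact Or.inr (h.tubesCompatible hS hT hne.symm)

lemma IsTubing.insert (h : IsTubing G 𝒯) (hC : IsTube G C)
    (hcompat : ∀ S ∈ 𝒯, S ≠ C → TubesCompatible G C S) : IsTubing G (insert C 𝒯) := by
  refine ⟨fun S hS => ?_, fun S hS S' hS' hne => ?_⟩
  · rcases mem_insert.1 hS with rfl | hS
    exacts [hC, h.1 S hS]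
  · rcases mem_insert.1 hS with rfl | h₁ <;> rcases mem_insert.1 hS' with rfl | h₂
    · exact absurd rfl hne
    · exact hcompat S' h₂ hne.symm
    · exact (hcompat S h₁ hne).symm
    · exact h.tubesCompatible h₁ h₂ hne

lemma IsMaxTubing.mem_of_tubesCompatible (h : IsMaxTubing G 𝒯) (hC : IsTube G C)
    (hcompat : ∀ S ∈ 𝒯, S ≠ C → TubesCompatible G C S) : C ∈ 𝒯 :=
  h.2 _ (h.1.insert hC hcompat) (subset_insert _ _) ▸ mem_insert_self C 𝒯

omit [DecidableEq V] in
lemma IsTubing.disjoint_of_maximal {P : Finset V → Prop}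
    (h : IsTubing G 𝒯) (hS : Maximal (fun S => S ∈ 𝒯 ∧ P S) S)
    (hT : Maximal (fun S => S ∈ 𝒯 ∧ P S) T) (hne : S ≠ T) : Disjoint S T := by
  rcases h.tubesCompatible hS.1.1 hT.1.1 hne with hST | hTS | ⟨hdisj, -⟩
  · exact absurd (le_antisymm hST.1 (hS.2 hT.1 hST.1)) hne
  · exact absurd (le_antisymm (hT.2 hS.1 hTS.1) hTS.1) hne
  · exact disjoint_left.2 hdisj

lemma tubesCompatible_of_maximal_connected {A : Finset V}
    (hC : Maximal (fun s : Finset V => s ⊆ A ∧ (G.induce (s : Set V)).Connected) C)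
    (hS : IsTube G S) (hSA : S ⊆ A) (hne : S ≠ C) : TubesCompatible G C S := by
  by_cases hSC : (S ∩ C).Nonempty
  · exact Or.inr (Or.inl (ssubset_of_subset_of_ne
      (G.subset_of_maximal_connected_of_inter_nonempty hC hS.2.2 hSA hSC) hne))
  · rw [not_nonempty_iff_eq_empty, ← disjoint_iff_inter_eq_empty] at hSC
    refine Or.inr (Or.inr ⟨fun v hvC hvS => disjoint_left.1 hSC hvS hvC, ?_⟩)
    intro u hu v hv huv
    have hSsub := G.subset_of_maximal_connected_of_adj hC hS.2.2 hSA hv hu huv.symm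
    exact disjoint_left.1 hSC hv (hSsub hv)

lemma IsMaxTubing.exists_mem_ssubset_of_mem_erase (h : IsMaxTubing G 𝒯)
    (hT : T ∈ insert univ 𝒯) {x y : V} (hy : y ∈ T) (hyS : ∀ S ∈ 𝒯, S ⊂ T → y ∉ S)
    (hx : x ∈ T.erase y) : ∃ S ∈ 𝒯, S ⊂ T ∧ x ∈ S := by
  obtain ⟨C, hxC, hC⟩ := Finite.exists_le_maximal
    (p := fun s : Finset V => s ⊆ T.erase y ∧ (G.induce (s : Set V)).Connected)
    (a := {x}) ⟨singleton_subset_iff.2 hx, by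
      rw [coe_singleton, SimpleGraph.induce_singleton_eq_top]; exact SimpleGraph.connected_top⟩
  have hxC : x ∈ C := singleton_subset_iff.1 hxC
  have hCT : C ⊂ T := hC.1.1.trans_ssubset (erase_ssubset hy)
  have hCtube : IsTube G C :=
    ⟨⟨x, hxC⟩, fun hCu => notMem_erase y T (hC.1.1 (hCu ▸ mem_univ y)), hC.1.2⟩
  refine ⟨C, h.mem_of_tubesCompatible hCtube fun S hS hne => ?_, hCT, hxC⟩
  rcases h.1.subset_or_tubesCompatible hS hT with hTS | hST | hTS | ⟨hdisj, hadj⟩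
  · exact Or.inl (hCT.trans_subset hTS)
  · exact tubesCompatible_of_maximal_connected hC (h.1.1 S hS)
      (subset_erase.2 ⟨hST.1, hyS S hS hST⟩) hne
  · exact Or.inl (hCT.trans hTS)
  · exact Or.inr (Or.inr ⟨fun v hv hvS => hdisj v hvS (hCT.1 hv),
      fun u hu v hv huv => hadj v hv u (hCT.1 hu) huv.symm⟩)

lemma maximal_mem_and_iff {β : Type*} [PartialOrder β] {s : Finset β} {P : β → Prop} {b : β} :
    Maximal (fun c => c ∈ s ∧ P c) b ↔ b ∈ s ∧ P b ∧ ∀ c ∈ s, P c → b ≤ c → b = c := by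
  simp only [maximal_iff, and_assoc, and_imp]

theorem maximal_proper_subtubes_partition_general
    (G : SimpleGraph V)
    (𝒯 : Finset (Finset V)) (h : IsMaxTubing G 𝒯)
    (T : Finset V) (hT : T ∈ insert Finset.univ 𝒯)
    (vT : V) (hvT : vT ∈ T ∧ ∀ S ∈ 𝒯, S ⊂ T → vT ∉ S) :
    (∀ S S' : Finset V,
        (S ∈ 𝒯 ∧ S ⊂ T ∧ ∀ S'' ∈ 𝒯, S'' ⊂ T → S ⊆ S'' → S = S'') →
        (S' ∈ 𝒯 ∧ S' ⊂ T ∧ ∀ S'' ∈ 𝒯, S'' ⊂ T → S' ⊆ S'' → S' = S'') →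
        S ≠ S' → Disjoint S S') ∧
    ∀ x : V, (x ∈ T ∧ x ≠ vT) ↔
      ∃ S : Finset V,
        (S ∈ 𝒯 ∧ S ⊂ T ∧ ∀ S'' ∈ 𝒯, S'' ⊂ T → S ⊆ S'' → S = S'') ∧ x ∈ S := by
  refine ⟨fun S S' hS hS' hne => ?_, fun x => ⟨fun ⟨hxT, hxv⟩ => ?_, ?_⟩⟩
  · exact h.1.disjoint_of_maximal (maximal_mem_and_iff (P := (· ⊂ T)) |>.2 hS)
      (maximal_mem_and_iff (P := (· ⊂ T)) |>.2 hS') hne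
  · obtain ⟨S₀, hS₀, hS₀T, hxS₀⟩ :=
      h.exists_mem_ssubset_of_mem_erase hT hvT.1 hvT.2 (mem_erase.2 ⟨hxv, hxT⟩)
    obtain ⟨S, hS₀S, hS⟩ := Finite.exists_le_maximal (p := fun S => S ∈ 𝒯 ∧ S ⊂ T) ⟨hS₀, hS₀T⟩
    exact ⟨S, maximal_mem_and_iff.1 hS, hS₀S hxS₀⟩
  · rintro ⟨S, ⟨hS, hST, -⟩, hxS⟩
    exact ⟨hST.1 hxS, fun e => hvT.2 S hS hST (e ▸ hxS)⟩

theorem maximal_proper_subtubes_partition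
    (G : SimpleGraph V) (hG : G.Connected)
    (𝒯 : Finset (Finset V)) (h : IsMaxTubing G 𝒯)
    (T : Finset V) (hT : T ∈ insert Finset.univ 𝒯) (hTcard : 2 ≤ T.card)
    (vT : V) (hvT : vT ∈ T ∧ ∀ S ∈ 𝒯, S ⊂ T → vT ∉ S) :
    (∀ S S' : Finset V,
        (S ∈ 𝒯 ∧ S ⊂ T ∧ ∀ S'' ∈ 𝒯, S'' ⊂ T → S ⊆ S'' → S = S'') →
        (S' ∈ 𝒯 ∧ S' ⊂ T ∧ ∀ S'' ∈ 𝒯, S'' ⊂ T → S' ⊆ S'' → S' = S'') →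
        S ≠ S' → Disjoint S S') ∧
    ∀ x : V, (x ∈ T ∧ x ≠ vT) ↔
      ∃ S : Finset V,
        (S ∈ 𝒯 ∧ S ⊂ T ∧ ∀ S'' ∈ 𝒯, S'' ⊂ T → S ⊆ S'' → S = S'') ∧ x ∈ S :=
  maximal_proper_subtubes_partition_general G 𝒯 h T hT vT hvT
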